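/- arXiv:2108.11946 — 3 statements merged into one kernel-verified Lean document; each statement's English description precedes it below -/
import Mathlib

section
/- Let G be a graph on n vertices with independence number α(G) < k, and let d ≥ 2 be a real number. If n ≥ 3·d^{k−1}, then G contains an induced subgraph on m vertices with m ≥ n/d^{k−1} whose minimum degree is at least (1 − 1/d)·m. -/
open Finset

/-- There is a copy (subgraph embedding) of `H` in `G` whose image lies in `A`. -/
def SimpleGraph.CopyIn {W V : Type*} (H : SimpleGraph W) (G : SimpleGraph V) (A : Set V) :
    Prop :=
  ∃ f : W → V, Function.Injective f ∧ (∀ a, f a ∈ A) ∧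
    ∀ ⦃a b⦄, H.Adj a b → G.Adj (f a) (f b)

/-- There is a copy of `H` in `G`. -/
def SimpleGraph.ContainsCopy {W V : Type*} (H : SimpleGraph W) (G : SimpleGraph V) : Prop :=
  H.CopyIn G Set.univ

/-- The disjoint union of `n` copies of `H`, denoted `nH` in the paper. -/
def SimpleGraph.nCopies {W : Type*} (n : ℕ) (H : SimpleGraph W) : SimpleGraph (Fin n × W) where
  Adj x y := x.1 = y.1 ∧ H.Adj x.2 y.2
  symm := ⟨fun x y h => ⟨h.1.symm, h.2.symm⟩⟩
  loopless := ⟨fun x h => H.loopless.irrefl x.2 h.2⟩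

/-- `N` is Ramsey for `H`: every red/blue colouring of the edges of `K_N` (encoded by its
red graph `R`, the blue graph being `Rᶜ`) contains a monochromatic copy of `H`. -/
def SimpleGraph.RamseyProp {W : Type*} (H : SimpleGraph W) (N : ℕ) : Prop :=
  ∀ R : SimpleGraph (Fin N), H.ContainsCopy R ∨ H.ContainsCopy Rᶜ

/-- The Ramsey number `r(H)`. -/
noncomputable def SimpleGraph.ramsey {W : Type*} (H : SimpleGraph W) : ℕ :=
  sInf {N | H.RamseyProp N}

/-- `I` is an independent set of `G`. -/
def SimpleGraph.IsIndep {V : Type*} (G : SimpleGraph V) (I : Set V) : Prop :=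
  I.Pairwise fun a b => ¬ G.Adj a b

/-- The independence number `α(G)`. -/
noncomputable def SimpleGraph.indepNumber {V : Type*} (G : SimpleGraph V) : ℕ :=
  sSup {n | ∃ I : Finset V, G.IsIndep ↑I ∧ I.card = n}

/-- `I` is an independent set of `G`, maximal with respect to inclusion. -/
def SimpleGraph.IsMaximalIndep {V : Type*} (G : SimpleGraph V) (I : Set V) : Prop :=
  G.IsIndep I ∧ ∀ J : Set V, G.IsIndep J → I ⊆ J → J = I

/-- `R` contains a copy of some member of the family `𝒟(G)` of graphs obtained from `G`
by removing a maximal independent set. -/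
def SimpleGraph.ContainsCopyOfD {V U : Type*} (G : SimpleGraph V) (R : SimpleGraph U) : Prop :=
  ∃ I : Set V, G.IsMaximalIndep I ∧ (G.induce Iᶜ).ContainsCopy R

/-- `R` contains a copy of some connected component of `H`, i.e. of a member of `𝒞(H)`. -/
def SimpleGraph.ContainsCopyOfComp {V U : Type*} (H : SimpleGraph V) (R : SimpleGraph U) :
    Prop :=
  ∃ c : H.ConnectedComponent, (H.induce c.supp).ContainsCopy R

/-- `R` contains a copy of some member of the family `𝒟_c(H)`: graphs obtained by removing a
maximal independent set of `H` and taking a connected component of the remainder. -/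
def SimpleGraph.ContainsCopyOfDc {V U : Type*} (H : SimpleGraph V) (R : SimpleGraph U) : Prop :=
  ∃ I : Set V, H.IsMaximalIndep I ∧
    ∃ c : (H.induce Iᶜ).ConnectedComponent, ((H.induce Iᶜ).induce c.supp).ContainsCopy R

/-- `R` contains a copy of some member of the family `𝒟'_c(H)`: graphs obtained by removing an
independent set of `H` of maximum size `α(H)` and taking a connected component of the
remainder. -/
def SimpleGraph.ContainsCopyOfDc' {V U : Type*} (H : SimpleGraph V) (R : SimpleGraph U) : Prop :=
  ∃ I : Set V, H.IsIndep I ∧ I.ncard = H.indepNumber ∧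
    ∃ c : (H.induce Iᶜ).ConnectedComponent, ((H.induce Iᶜ).induce c.supp).ContainsCopy R

/-- The asymmetric Ramsey number `r(G, H)`. -/
noncomputable def SimpleGraph.ramsey2 {V W : Type*} (G : SimpleGraph V) (H : SimpleGraph W) :
    ℕ :=
  sInf {N | ∀ R : SimpleGraph (Fin N), G.ContainsCopy R ∨ H.ContainsCopy Rᶜ}

/-- The Ramsey number `r(𝒟(G), H)`. -/
noncomputable def SimpleGraph.ramseyDFam {V W : Type*} (G : SimpleGraph V)
    (H : SimpleGraph W) : ℕ :=
  sInf {N | ∀ R : SimpleGraph (Fin N), G.ContainsCopyOfD R ∨ H.ContainsCopy Rᶜ}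

/-- The Ramsey number `r(𝒟(G), 𝒞(H))`. -/
noncomputable def SimpleGraph.ramseyDCFam {V W : Type*} (G : SimpleGraph V)
    (H : SimpleGraph W) : ℕ :=
  sInf {N | ∀ R : SimpleGraph (Fin N), G.ContainsCopyOfD R ∨ H.ContainsCopyOfComp Rᶜ}

/-- The Ramsey number `r(𝒟_c(H), 𝒟(H))`. -/
noncomputable def SimpleGraph.ramseyDcD {V : Type*} (H : SimpleGraph V) : ℕ :=
  sInf {N | ∀ R : SimpleGraph (Fin N), H.ContainsCopyOfDc R ∨ H.ContainsCopyOfD Rᶜ}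

/-- The Ramsey number `r(𝒟'_c(H), 𝒟(H))`. -/
noncomputable def SimpleGraph.ramseyDc'D {V : Type*} (H : SimpleGraph V) : ℕ :=
  sInf {N | ∀ R : SimpleGraph (Fin N), H.ContainsCopyOfDc' R ∨ H.ContainsCopyOfD Rᶜ}

/-- An `H`-tie in the colouring with red graph `Red`: a set of `2|H| - α(H)` vertices
containing both a red and a blue copy of `H`. -/
def SimpleGraph.IsTie {V : Type*} {k : ℕ} (H : SimpleGraph (Fin k)) (Red : SimpleGraph V)
    (S : Finset V) : Prop :=
  S.card = 2 * k - H.indepNumber ∧ H.CopyIn Red ↑S ∧ H.CopyIn Redᶜ ↑S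

/-- A `K_k`-tiling of `G`: pairwise disjoint `k`-cliques covering all but at most
`|G| mod k` vertices. -/
def SimpleGraph.HasKkTiling {V : Type*} [Fintype V] [DecidableEq V] (G : SimpleGraph V)
    (k : ℕ) : Prop :=
  ∃ T : Finset (Finset V), (∀ S ∈ T, G.IsNClique k S) ∧
    (T : Set (Finset V)).PairwiseDisjoint id ∧
    Fintype.card V - (T.biUnion id).card ≤ Fintype.card V % k

/-- A perfect `K_k`-tiling of `G`: pairwise disjoint `k`-cliques covering all vertices. -/
def SimpleGraph.HasPerfectKkTiling {V : Type*} [Fintype V] [DecidableEq V] (G : SimpleGraph V)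
    (k : ℕ) : Prop :=
  ∃ T : Finset (Finset V), (∀ S ∈ T, G.IsNClique k S) ∧
    (T : Set (Finset V)).PairwiseDisjoint id ∧ T.biUnion id = Finset.univ

/-- `a` and `b` are joined by an edge of colour `c` (where `true` is red and `false` is blue)
in the colouring with red graph `Red`. -/
def SimpleGraph.colorAdj {V : Type*} (Red : SimpleGraph V) (c : Bool) (a b : V) : Prop :=
  if c then Red.Adj a b else Redᶜ.Adj a b

/-! Repeatedly delete a vertex `v` whose degree inside the current set `S` is below
`(1 - 1/d)|S|` and continue inside its non-neighbourhood `S'`. Then `|S'| ≥ |S|/d - 1`,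
which for `d ≥ 2` gives `|S| + 2 ≤ d (|S'| + 2)`, a form that telescopes. The deleted
vertices together with any vertex of the final set `T` form an independent set, so at most
`k - 2` vertices are deleted if `T ≠ ∅`, and then `|T| ≥ (n + 2)/d^(k-2) - 2 ≥ n/d^(k-1)`.
If `T = ∅`, at most `k - 1` deletions give `n + 2 ≤ 2 d^(k-1)`, contradicting
`n ≥ 3 d^(k-1)`. -/

namespace SimpleGraph

variable {V : Type*} (G : SimpleGraph V)

def HasMinDegreeRatio [DecidableRel G.Adj] (c : ℝ) (S : Finset V) : Prop :=
  ∀ v ∈ S, c * (S.card : ℝ) ≤ ((S.filter (G.Adj v)).card : ℝ)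

variable {G}

theorem IsIndep.card_le_indepNumber [Fintype V] {I : Finset V} (hI : G.IsIndep ↑I) :
    I.card ≤ G.indepNumber :=
  le_csSup ⟨Fintype.card V, by rintro _ ⟨J, -, rfl⟩; exact J.card_le_univ⟩ ⟨I, hI, rfl⟩

theorem IsIndep.insert {I : Set V} {v : V} (hI : G.IsIndep I) (hv : ∀ u ∈ I, ¬ G.Adj v u) :
    G.IsIndep (insert v I) :=
  Set.pairwise_insert.mpr ⟨hI, fun u hu _ => ⟨hv u hu, fun h => hv u hu h.symm⟩⟩

theorem card_add_two_le_mul_card_nonAdj [DecidableEq V] [DecidableRel G.Adj] {d : ℝ}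
    (hd : 2 ≤ d) {S : Finset V} {v : V} (hv : v ∈ S)
    (hlow : ((S.filter (G.Adj v)).card : ℝ) < (1 - 1 / d) * S.card) :
    (S.card + 2 : ℝ) ≤ d * (((S.erase v).filter (¬ G.Adj v ·)).card + 2) := by
  have hsplit := (S.erase v).card_filter_add_card_filter_not (G.Adj v)
  have hadj := card_le_card (filter_subset_filter (G.Adj v) (S.erase_subset v))
  have herase := card_erase_add_one hv
  set S' := (S.erase v).filter (¬ G.Adj v ·)
  have hsmall : (S.card : ℝ) < d * (S'.card + 1) := by
    rw [← div_lt_iff₀' (by linarith)]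
    rw [sub_mul, one_div_mul_eq_div] at hlow
    have : (S.card : ℝ) ≤ S'.card + (S.filter (G.Adj v)).card + 1 := by
      norm_cast; omega
    linarith
  linarith

variable (G) in
theorem exists_hasMinDegreeRatio_subset_and_isIndep [DecidableEq V] [DecidableRel G.Adj] {d : ℝ}
    (hd : 2 ≤ d) (S : Finset V) :
    ∃ T ⊆ S, ∃ I ⊆ S, G.HasMinDegreeRatio (1 - 1 / d) T ∧ G.IsIndep ↑I ∧
      (∀ x ∈ T, x ∉ I ∧ ∀ y ∈ I, ¬ G.Adj x y) ∧
      (S.card + 2 : ℝ) ≤ d ^ I.card * (T.card + 2) := by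
  induction S using Finset.strongInduction with
  | H S ih =>
    by_cases hS : G.HasMinDegreeRatio (1 - 1 / d) S
    · exact ⟨S, subset_rfl, ∅, empty_subset S, hS, by simp [IsIndep], by simp, by simp⟩
    obtain ⟨v, hv, hlow⟩ :
        ∃ v ∈ S, ((S.filter (G.Adj v)).card : ℝ) < (1 - 1 / d) * S.card := by
      simpa [HasMinDegreeRatio] using hS
    set S' := (S.erase v).filter (¬ G.Adj v ·)
    have hS'S : S' ⊆ S := (filter_subset _ _).trans (erase_subset v S)
    have hvS' : v ∉ S' := fun h => (mem_erase.mp (mem_filter.mp h).1).1 rfl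
    obtain ⟨T, hTS', I, hIS', hT, hI, hTI, hbound⟩ := ih S' (ssubset_of_subset_of_ne hS'S
      fun h => hvS' (h ▸ hv))
    have hvI : ∀ u ∈ I, ¬ G.Adj v u := fun u hu => (mem_filter.mp (hIS' hu)).2
    refine ⟨T, hTS'.trans hS'S, insert v I, insert_subset hv (hIS'.trans hS'S), hT,
      by rw [coe_insert]; exact hI.insert hvI, fun x hx => ?_, ?_⟩
    · have hvx : ¬ G.Adj v x := (mem_filter.mp (hTS' hx)).2
      refine ⟨?_, ?_⟩
      · rw [mem_insert, not_or]
        exact ⟨fun h => hvS' (h ▸ hTS' hx), (hTI x hx).1⟩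
      · intro y hy
        obtain rfl | hy := mem_insert.mp hy
        exacts [fun h => hvx h.symm, (hTI x hx).2 y hy]
    · rw [card_insert_of_notMem fun h => hvS' (hIS' h), pow_succ']
      calc (S.card + 2 : ℝ) ≤ d * (S'.card + 2) := card_add_two_le_mul_card_nonAdj hd hv hlow
        _ ≤ d * (d ^ I.card * (T.card + 2)) := by gcongr
        _ = _ := by ring

end SimpleGraph

/-- Lemma 2.1. If `G` is an `n`-vertex graph with `α(G) < k` and `d ≥ 2`
is real with `n ≥ 3·d^(k-1)`, then `G` has an induced subgraph on `m ≥ n / d^(k-1)` vertices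
with minimum degree at least `(1 - 1/d)·m`. -/
theorem exists_induced_subgraph_high_minDegree {V : Type*} [Fintype V] [DecidableEq V]
    (G : SimpleGraph V) [DecidableRel G.Adj] (n k : ℕ) (hn : Fintype.card V = n)
    (hα : G.indepNumber < k) (d : ℝ) (hd : 2 ≤ d) (hbig : 3 * d ^ (k - 1) ≤ (n : ℝ)) :
    ∃ S : Finset V, ((n : ℝ) / d ^ (k - 1) ≤ (S.card : ℝ)) ∧
      ∀ v ∈ S, (1 - 1 / d) * (S.card : ℝ) ≤ ((S.filter (G.Adj v)).card : ℝ) := by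
  obtain ⟨T, -, I, -, hT, hI, hTI, hbound⟩ :=
    G.exists_hasMinDegreeRatio_subset_and_isIndep hd univ
  rw [card_univ, hn] at hbound
  have hpow_mono : Monotone (d ^ · : ℕ → ℝ) := pow_right_mono₀ (by linarith)
  obtain ⟨x, hx⟩ : T.Nonempty := by
    rw [nonempty_iff_ne_empty]
    rintro rfl
    have hIk : I.card ≤ k - 1 := by have := hI.card_le_indepNumber; omega
    have := hpow_mono hIk
    simp only [card_empty, Nat.cast_zero, zero_add] at hbound
    linarith
  have hIk : I.card + 1 ≤ k - 1 := by
    have hxI : G.IsIndep ↑(insert x I) := by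
      rw [coe_insert]; exact hI.insert (hTI x hx).2
    have := hxI.card_le_indepNumber
    rw [card_insert_of_notMem (hTI x hx).1] at this
    omega
  have hdD : d * d ^ I.card ≤ d ^ (k - 1) := pow_succ' d I.card ▸ hpow_mono hIk
  have hD : 0 < d ^ I.card := by positivity
  refine ⟨T, ?_, hT⟩
  rw [div_le_iff₀ (by positivity)]
  nlinarith
end

section
/- Let m' ≥ m be positive integers and let G be a graph on m' vertices with minimum degree δ. Let d be a real number with m/2 ≤ d, and set r := (m·δ)/(m'·d), and suppose r ≥ 1 and m·m' < r^{⌊(r−1)d⌋}. Then G has an m-vertex subset S of its vertices with the property that every vertex of G has more than d neighbours in S. -/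
open Finset

/-!
For a vertex `v` fix `δ` of its neighbours. The number of `m`-sets meeting them in exactly `i`
points is the hypergeometric term `Q i = C(δ, i) C(m' - δ, m - i)`, whose mean is
`μ = mδ/m' = rd`. Below the mean these terms grow quickly: multiplying the two ratios
`Q (i+1) / Q i` at positions symmetric about the middle of `[j, j + N]` gives at least `r²`,
so `r^N Q j ≤ Q (j + N) ≤ C(m', m)` for `j ≤ d` and `N = ⌊(r-1)d⌋`. Hence fewer than
`m C(m', m) / r^N` of the `m`-sets give `v` at most `d` neighbours, and since
`m m' < r^N` some `m`-set is good for all `m'` vertices at once.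
-/

theorem Nat.choose_mul_choose_le_add_choose {a b k m : ℕ} (hk : k ≤ m) :
    a.choose k * b.choose (m - k) ≤ (a + b).choose m := by
  rw [Nat.add_choose_eq]
  exact single_le_sum (f := fun p : ℕ × ℕ => a.choose p.1 * b.choose p.2)
    (fun _ _ => Nat.zero_le _)
    (show (k, m - k) ∈ antidiagonal m from mem_antidiagonal.mpr (Nat.add_sub_cancel' hk))

theorem Finset.prod_range_pow_mul_le {f : ℕ → ℝ} {c : ℝ} {j n : ℕ}
    (hf : ∀ k ≤ n, 0 < f (j + k))
    (hpair : ∀ k < n,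
      c ^ 2 * (f (j + k) * f (j + (n - 1 - k))) ≤ f (j + k + 1) * f (j + (n - 1 - k) + 1)) :
    c ^ n * f j ≤ f (j + n) := by
  set X := ∏ k ∈ range n, f (j + k)
  set Y := ∏ k ∈ range n, f (j + k + 1)
  have hY : 0 < Y := prod_pos fun k hk => hf (k + 1) (mem_range.mp hk)
  have hsq : (c ^ n * X) ^ 2 ≤ Y ^ 2 := calc
    (c ^ n * X) ^ 2 = ∏ k ∈ range n, c ^ 2 * (f (j + k) * f (j + (n - 1 - k))) := by
      rw [prod_mul_distrib, prod_mul_distrib, prod_const, card_range,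
        prod_range_reflect (fun k => f (j + k)) n]
      ring
    _ ≤ ∏ k ∈ range n, f (j + k + 1) * f (j + (n - 1 - k) + 1) :=
      prod_le_prod (fun k hk => by
        have := hf k (mem_range.mp hk).le
        have := hf (n - 1 - k) (by omega)
        positivity) fun k hk => hpair k (mem_range.mp hk)
    _ = Y ^ 2 := by
      rw [prod_mul_distrib, prod_range_reflect (fun k => f (j + k + 1)) n]
      ring
  have hXY : c ^ n * X ≤ Y := le_of_pow_le_pow_left₀ two_ne_zero hY.le hsq
  -- both `X * f (j + n)` and `f j * Y` are the product of `f` over `[j, j + n]`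
  have htel : X * f (j + n) = f j * Y := by
    rw [← prod_range_succ (fun k => f (j + k)), prod_range_succ', add_zero, mul_comm]
    rfl
  refine le_of_mul_le_mul_right ?_ hY
  calc c ^ n * f j * Y = c ^ n * X * f (j + n) := by rw [mul_assoc, ← htel]; ring
    _ ≤ Y * f (j + n) := by gcongr; exact (hf n le_rfl).le
    _ = f (j + n) * Y := mul_comm _ _

theorem Finset.exists_forall_not_of_sum_card_filter_lt {ι α : Type*} [Fintype ι] {s : Finset α}
    {p : ι → α → Prop} [∀ i, DecidablePred (p i)] (h : ∑ i, #{x ∈ s | p i x} < #s) :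
    ∃ x ∈ s, ∀ i, ¬ p i x := by
  classical
  by_contra! hall
  refine h.not_ge (le_trans (card_le_card fun x hx => ?_) card_biUnion_le)
  obtain ⟨i, hi⟩ := hall x hx
  exact mem_biUnion.mpr ⟨i, mem_univ i, mem_filter.mpr ⟨hx, hi⟩⟩

theorem pair_bound_corner {m d x : ℝ} (hd : m / 2 ≤ d) (hdx : d ≤ x) (hxm : x ≤ m) :
    (m - x) ^ 2 * (d + 1) * x ≤ (m - d) * (m + 1 - x) * d ^ 2 := by
  obtain ⟨u, v, w, hu, hv, hw, rfl, rfl, rfl⟩ : ∃ u v w : ℝ, 0 ≤ u ∧ 0 ≤ v ∧ 0 ≤ w ∧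
      m = 2 * u + 2 * v + w ∧ d = u + v + w ∧ x = 2 * u + v + w :=
    ⟨x - d, m - x, 2 * d - m, by linarith, by linarith, by linarith, by ring, by ring, by ring⟩
  -- in these coordinates every coefficient of the difference is nonnegative
  rw [← sub_nonneg]
  ring_nf
  positivity

theorem pair_bound {m d μ j a b : ℝ} (hd : m / 2 ≤ d) (hdμ : d ≤ μ) (hμm : μ ≤ m)
    (hj : 0 ≤ j) (hjd : j ≤ d) (ha : j + 1 ≤ a) (hb : j + 1 ≤ b) (hab : a + b ≤ j + 1 + μ) :
    (m - μ) ^ 2 * a * b ≤ d ^ 2 * (m + 1 - a) * (m + 1 - b) := by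
  set y := a + b - (j + 1)
  have hextreme : (m - μ) ^ 2 * (j + 1) * y ≤ (m - j) * (m + 1 - y) * d ^ 2 := calc
    (m - μ) ^ 2 * (j + 1) * y ≤ (m - μ) ^ 2 * (d + 1) * μ := by
      have := mul_nonneg (sq_nonneg (m - μ)) (by linarith : 0 ≤ d + 1)
      gcongr <;> linarith
    _ ≤ (m - d) * (m + 1 - μ) * d ^ 2 := pair_bound_corner hd hdμ hμm
    _ ≤ (m - j) * (m + 1 - y) * d ^ 2 := by gcongr <;> linarith
  have hsq : (m - μ) ^ 2 ≤ d ^ 2 := pow_le_pow_left₀ (by linarith) (by linarith) 2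
  -- `a b` and `(m+1-a)(m+1-b)` exceed their values at `(j+1, y)` by the same amount
  have hP : 0 ≤ (a - (j + 1)) * (b - (j + 1)) := mul_nonneg (by linarith) (by linarith)
  nlinarith [mul_le_mul_of_nonneg_right hsq hP]

/-- The number of `m`-subsets of an `n`-set meeting a fixed `k`-subset in exactly `i` points,
provided `i ≤ m` (otherwise the truncated `m - i` makes it meaningless). -/
def hypergeomCount (n k m i : ℕ) : ℕ := k.choose i * (n - k).choose (m - i)

theorem hypergeomCount_le_choose {n k m i : ℕ} (hk : k ≤ n) (hi : i ≤ m) :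
    hypergeomCount n k m i ≤ n.choose m := by
  have := Nat.choose_mul_choose_le_add_choose (a := k) (b := n - k) hi
  rwa [Nat.add_sub_cancel' hk] at this

theorem hypergeomCount_succ_mul {n k m i : ℕ} (hi : i < m) :
    (k - i) * (m - i) * hypergeomCount n k m i =
      (i + 1) * (n - k - (m - (i + 1))) * hypergeomCount n k m (i + 1) := by
  have hk := Nat.choose_succ_right_eq k i
  have hnk := Nat.choose_succ_right_eq (n - k) (m - (i + 1))
  rw [show m - (i + 1) + 1 = m - i by omega] at hnk
  unfold hypergeomCount
  calc (k - i) * (m - i) * (k.choose i * (n - k).choose (m - i))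
      = (k.choose i * (k - i)) * ((n - k).choose (m - i) * (m - i)) := by ring
    _ = (k.choose (i + 1) * (i + 1)) *
          ((n - k).choose (m - (i + 1)) * (n - k - (m - (i + 1)))) := by
      rw [← hk, hnk]
    _ = _ := by ring

theorem hypergeomCount_pos_iff {n k m i : ℕ} :
    0 < hypergeomCount n k m i ↔ i ≤ k ∧ m - i ≤ n - k := by
  simp only [hypergeomCount, Nat.pos_iff_ne_zero, mul_ne_zero_iff, Nat.choose_ne_zero_iff]

theorem hypergeomCount_step {n k m i : ℕ} {μ : ℝ} (hμ : n * μ = m * k) (hμm : μ ≤ m)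
    (hμk : μ ≤ k) (hi : i + 1 ≤ μ) :
    μ * (m - i) * hypergeomCount n k m i ≤ (i + 1) * (m - μ) * hypergeomCount n k m (i + 1) := by
  have hik : i < k := by exact_mod_cast (show (i : ℝ) < k by linarith)
  have him : i < m := by exact_mod_cast (show (i : ℝ) < m by linarith)
  have hRHS : 0 ≤ (i + 1) * (m - μ) * (hypergeomCount n k m (i + 1) : ℝ) := by
    have := sub_nonneg.mpr hμm
    positivity
  rcases Nat.eq_zero_or_pos (hypergeomCount n k m i) with h0 | hpos
  · simpa [h0] using hRHS
  have hmi := (hypergeomCount_pos_iff.mp hpos).2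
  have hrec : ((k : ℝ) - i) * (m - i) * hypergeomCount n k m i =
      (i + 1) * (n - k - m + i + 1) * hypergeomCount n k m (i + 1) := by
    have := congrArg (Nat.cast (R := ℝ)) (hypergeomCount_succ_mul (n := n) (k := k) him)
    push_cast [Nat.cast_sub hik.le, Nat.cast_sub him.le, Nat.cast_sub (show k ≤ n by omega),
      Nat.cast_sub (show m - (i + 1) ≤ n - k by omega), Nat.cast_sub (show i + 1 ≤ m by omega)]
      at this
    linear_combination this
  -- `n μ = m k` turns the difference of the two sides into `m (μ - i) - μ ≥ μ (μ - i - 1)`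
  have hmean : μ * (n - k - m + i + 1) ≤ (k - i) * (m - μ) := by
    nlinarith [mul_le_mul_of_nonneg_right hμm (by linarith : 0 ≤ μ - i),
      mul_nonneg (by linarith : 0 ≤ μ) (by linarith : 0 ≤ μ - i - 1)]
  refine le_of_mul_le_mul_left ?_ (show 0 < (k : ℝ) - i by linarith)
  calc ((k : ℝ) - i) * (μ * (m - i) * hypergeomCount n k m i)
      = μ * (n - k - m + i + 1) * ((i + 1) * hypergeomCount n k m (i + 1)) := by
        linear_combination μ * hrec
    _ ≤ (k - i) * (m - μ) * ((i + 1) * hypergeomCount n k m (i + 1)) := by gcongr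
    _ = (k - i) * ((i + 1) * (m - μ) * hypergeomCount n k m (i + 1)) := by ring

theorem hypergeomCount_pair {n k m i i' : ℕ} {μ d j : ℝ} (hμ : n * μ = m * k) (hμm : μ ≤ m)
    (hμk : μ ≤ k) (hd : m / 2 ≤ d) (hdμ : d ≤ μ) (hj : 0 ≤ j) (hjd : j ≤ d) (hji : j ≤ i)
    (hji' : j ≤ i') (hii' : i + i' + 1 ≤ j + μ) :
    (μ / d) ^ 2 * (hypergeomCount n k m i * hypergeomCount n k m i') ≤
      hypergeomCount n k m (i + 1) * hypergeomCount n k m (i' + 1) := by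
  have hd0 : 0 < d := by nlinarith
  have hstep := hypergeomCount_step hμ hμm hμk (i := i) (by linarith)
  have hstep' := hypergeomCount_step hμ hμm hμk (i := i') (by linarith)
  have hpair := pair_bound hd hdμ hμm hj hjd (a := i + 1) (b := i' + 1) (by linarith)
    (by linarith) (by linarith)
  rw [div_pow, div_mul_eq_mul_div, div_le_iff₀ (by positivity)]
  refine le_of_mul_le_mul_left ?_ (mul_pos (show 0 < (m : ℝ) - i by linarith)
    (show 0 < (m : ℝ) - i' by linarith))
  have hμ0 : 0 ≤ μ := by linarith
  have hmμ : 0 ≤ (m : ℝ) - μ := by linarith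
  have hmi' : 0 ≤ (m : ℝ) - i' := by linarith
  calc ((m : ℝ) - i) * (m - i') *
        (μ ^ 2 * (hypergeomCount n k m i * hypergeomCount n k m i'))
      = (μ * (m - i) * hypergeomCount n k m i) * (μ * (m - i') * hypergeomCount n k m i') := by
        ring
    _ ≤ ((i + 1) * (m - μ) * hypergeomCount n k m (i + 1)) *
          ((i' + 1) * (m - μ) * hypergeomCount n k m (i' + 1)) :=
        mul_le_mul hstep hstep' (by positivity) (by positivity)
    _ = (m - μ) ^ 2 * (i + 1) * (i' + 1) *
          (hypergeomCount n k m (i + 1) * hypergeomCount n k m (i' + 1)) := by ring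
    _ ≤ d ^ 2 * (m + 1 - (i + 1)) * (m + 1 - (i' + 1)) *
          (hypergeomCount n k m (i + 1) * hypergeomCount n k m (i' + 1)) := by gcongr
    _ = _ := by ring

theorem hypergeomCount_growth {n k m j N : ℕ} {μ d : ℝ} (hμ : n * μ = m * k) (hμm : μ ≤ m)
    (hμk : μ ≤ k) (hd : m / 2 ≤ d) (hdμ : d ≤ μ) (hjd : j ≤ d) (hjN : j + N ≤ μ) :
    (μ / d) ^ N * hypergeomCount n k m j ≤ hypergeomCount n k m (j + N) := by
  rcases Nat.eq_zero_or_pos (hypergeomCount n k m j) with h0 | hpos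
  · simp [h0]
  have hmj := (hypergeomCount_pos_iff.mp hpos).2
  have hjNk : j + N ≤ k := by exact_mod_cast (hjN.trans hμk)
  refine Finset.prod_range_pow_mul_le (f := fun i => (hypergeomCount n k m i : ℝ))
    (fun l hl => ?_) fun l hl => ?_
  · exact_mod_cast hypergeomCount_pos_iff.mpr ⟨by omega, by omega⟩
  · refine hypergeomCount_pair hμ hμm hμk hd hdμ (Nat.cast_nonneg j) hjd (by simp) (by simp) ?_
    have hsum : ((j + l + (j + (N - 1 - l)) + 1 : ℕ) : ℝ) = j + (j + N) := by
      rw [show j + l + (j + (N - 1 - l)) + 1 = j + (j + N) by omega]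
      push_cast
      ring
    push_cast at hsum ⊢
    linarith

section

variable {V : Type*} [Fintype V] [DecidableEq V]

theorem card_filter_card_inter_eq_le (A : Finset V) (m j : ℕ) :
    #{S ∈ powersetCard m univ | #(S ∩ A) = j} ≤ hypergeomCount (Fintype.card V) #A m j := by
  calc #{S ∈ powersetCard m univ | #(S ∩ A) = j}
      ≤ #(A.powersetCard j ×ˢ Aᶜ.powersetCard (m - j)) := by
        refine card_le_card_of_injOn (fun S => (S ∩ A, S \ A)) ?_ ?_
        · intro S hS
          simp only [coe_filter, mem_powersetCard_univ, Set.mem_ofPred_eq] at hS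
          simp only [coe_product, Set.mem_prod, mem_coe, mem_powersetCard]
          refine ⟨⟨inter_subset_right, hS.2⟩, fun x hx => mem_compl.mpr (mem_sdiff.mp hx).2, ?_⟩
          have := card_sdiff_add_card_inter S A
          omega
        · intro S₁ _ S₂ _ h
          simp only [Prod.mk.injEq] at h
          rw [← sdiff_union_inter S₁ A, ← sdiff_union_inter S₂ A, h.1, h.2]
    _ = hypergeomCount (Fintype.card V) #A m j := by
      rw [card_product, card_powersetCard, card_powersetCard, card_compl, hypergeomCount]

theorem card_filter_card_inter_le_le (A : Finset V) (m t : ℕ) :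
    #{S ∈ powersetCard m univ | #(S ∩ A) ≤ t} ≤
      ∑ j ∈ range (t + 1), hypergeomCount (Fintype.card V) #A m j := by
  calc #{S ∈ powersetCard m univ | #(S ∩ A) ≤ t}
      ≤ #((range (t + 1)).biUnion fun j => {S ∈ powersetCard m univ | #(S ∩ A) = j}) := by
        refine card_le_card fun S hS => ?_
        rw [mem_filter] at hS
        exact mem_biUnion.mpr
          ⟨_, mem_range.mpr (Nat.lt_succ_of_le hS.2), mem_filter.mpr ⟨hS.1, rfl⟩⟩
    _ ≤ ∑ j ∈ range (t + 1), #{S ∈ powersetCard m univ | #(S ∩ A) = j} := card_biUnion_le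
    _ ≤ _ := sum_le_sum fun j _ => card_filter_card_inter_eq_le A m j

namespace SimpleGraph

variable (G : SimpleGraph V) [DecidableRel G.Adj]

theorem card_filter_card_filter_adj_le {v : V} {δ : ℕ} (hδ : δ ≤ G.degree v) (m t : ℕ) :
    #{S ∈ powersetCard m univ | #(S.filter (G.Adj v)) ≤ t} ≤
      ∑ j ∈ range (t + 1), hypergeomCount (Fintype.card V) δ m j := by
  obtain ⟨A, hAv, rfl⟩ :=
    exists_subset_card_eq (hδ.trans_eq (G.card_neighborFinset_eq_degree v).symm)
  refine le_trans (card_le_card (monotone_filter_right _ fun S _ hS => ?_))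
    (card_filter_card_inter_le_le A m t)
  refine le_trans (card_le_card fun x hx => ?_) hS
  rw [mem_inter] at hx
  exact mem_filter.mpr ⟨hx.1, (G.mem_neighborFinset v x).mp (hAv hx.2)⟩

theorem pow_mul_card_filter_sparse_le {v : V} {m δ : ℕ} {μ d : ℝ} (hδ : δ ≤ G.degree v)
    (hμ : Fintype.card V * μ = m * δ) (hμm : μ ≤ m) (hμδ : μ ≤ δ) (hd : m / 2 ≤ d)
    (hdμ : d ≤ μ) :
    (μ / d) ^ ⌊μ - d⌋₊ * #{S ∈ powersetCard m univ | #(S.filter (G.Adj v)) ≤ ⌊d⌋₊} ≤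
      (⌊d⌋₊ + 1) * (Fintype.card V).choose m := by
  set N := ⌊μ - d⌋₊
  have hd0 : 0 ≤ d := le_trans (by positivity) hd
  have hδV : δ ≤ Fintype.card V := hδ.trans (G.degree_lt_card_verts v).le
  have hterm : ∀ j ∈ range (⌊d⌋₊ + 1),
      (μ / d) ^ N * hypergeomCount (Fintype.card V) δ m j ≤ (Fintype.card V).choose m := by
    intro j hj
    have hjd : (j : ℝ) ≤ d :=
      (Nat.cast_le.mpr (Nat.lt_succ_iff.mp (mem_range.mp hj))).trans (Nat.floor_le hd0)
    have hjN : (j : ℝ) + N ≤ μ := by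
      have := Nat.floor_le (sub_nonneg.mpr hdμ)
      linarith
    have hjNm : j + N ≤ m := by exact_mod_cast hjN.trans hμm
    calc (μ / d) ^ N * (hypergeomCount (Fintype.card V) δ m j : ℝ)
        ≤ hypergeomCount (Fintype.card V) δ m (j + N) :=
          hypergeomCount_growth hμ hμm hμδ hd hdμ hjd hjN
      _ ≤ (Fintype.card V).choose m := by exact_mod_cast hypergeomCount_le_choose hδV hjNm
  calc (μ / d) ^ N * (#{S ∈ powersetCard m univ | #(S.filter (G.Adj v)) ≤ ⌊d⌋₊} : ℝ)
      ≤ (μ / d) ^ N * ∑ j ∈ range (⌊d⌋₊ + 1), (hypergeomCount (Fintype.card V) δ m j : ℝ) := by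
        have : 0 ≤ μ / d := div_nonneg (hd0.trans hdμ) hd0
        gcongr
        exact_mod_cast G.card_filter_card_filter_adj_le hδ m ⌊d⌋₊
    _ ≤ ∑ _j ∈ range (⌊d⌋₊ + 1), ((Fintype.card V).choose m : ℝ) := by
        rw [mul_sum]
        exact sum_le_sum hterm
    _ = (⌊d⌋₊ + 1) * (Fintype.card V).choose m := by simp

theorem exists_card_eq_forall_lt_card_filter_adj {m δ : ℕ} {μ d : ℝ} (hmV : m ≤ Fintype.card V)
    (hδ : ∀ v, δ ≤ G.degree v) (hμ : Fintype.card V * μ = m * δ) (hμm : μ < m) (hμδ : μ ≤ δ)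
    (hd : m / 2 ≤ d) (hdμ : d ≤ μ) (hmain : m * Fintype.card V < (μ / d) ^ ⌊μ - d⌋₊) :
    ∃ S : Finset V, #S = m ∧ ∀ v, d < #(S.filter (G.Adj v)) := by
  set bad := fun v => #{S ∈ powersetCard m univ | #(S.filter (G.Adj v)) ≤ ⌊d⌋₊}
  have hd0 : 0 ≤ d := le_trans (by positivity) hd
  have hbad (v : V) : (μ / d) ^ ⌊μ - d⌋₊ * bad v ≤ m * (Fintype.card V).choose m := by
    refine (G.pow_mul_card_filter_sparse_le (hδ v) hμ hμm.le hμδ hd hdμ).trans ?_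
    have : ((⌊d⌋₊ : ℕ) : ℝ) + 1 ≤ m := by exact_mod_cast (Nat.floor_lt hd0).mpr (by linarith)
    gcongr
  have hcount : ∑ v, bad v < #(powersetCard m (univ : Finset V)) := by
    rw [card_powersetCard, card_univ]
    have hC : (0 : ℝ) < (Fintype.card V).choose m := by exact_mod_cast Nat.choose_pos hmV
    have hsum := sum_le_sum fun v (_ : v ∈ univ) => hbad v
    rw [← mul_sum, sum_const, card_univ, nsmul_eq_mul] at hsum
    have : (μ / d) ^ ⌊μ - d⌋₊ * ∑ v, (bad v : ℝ) <
        (μ / d) ^ ⌊μ - d⌋₊ * (Fintype.card V).choose m := by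
      nlinarith [mul_lt_mul_of_pos_right hmain hC]
    exact_mod_cast lt_of_mul_lt_mul_left this (pow_nonneg (div_nonneg (hd0.trans hdμ) hd0) _)
  obtain ⟨S, hS, hgood⟩ := exists_forall_not_of_sum_card_filter_lt hcount
  refine ⟨S, mem_powersetCard_univ.mp hS, fun v => ?_⟩
  calc d < ⌊d⌋₊ + 1 := Nat.lt_floor_add_one d
    _ ≤ #(S.filter (G.Adj v)) := by exact_mod_cast not_le.mp (hgood v)

end SimpleGraph

end

/-- Lemma 2.3. Let `m' ≥ m` be positive, `G` an `m'`-vertex graph with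
minimum degree `δ`, `d` real with `m/2 ≤ d`, `r = mδ/(m'd) ≥ 1` and `m·m' < r^⌊(r-1)d⌋`.
Then `G` has an `m`-vertex subset `S` such that every vertex of `G` has more than `d`
neighbours in `S`. -/
theorem exists_good_subset {V : Type*} [Fintype V] [DecidableEq V] (G : SimpleGraph V)
    [DecidableRel G.Adj] (m m' δ : ℕ) (hm : 0 < m) (hmm : m ≤ m')
    (hcard : Fintype.card V = m') (hδ : G.minDegree = δ)
    (d r : ℝ) (hd : (m : ℝ) / 2 ≤ d) (hr : r = ((m : ℝ) * δ) / ((m' : ℝ) * d))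
    (hr1 : 1 ≤ r) (hmain : (m : ℝ) * (m' : ℝ) < r ^ ⌊(r - 1) * d⌋₊) :
    ∃ S : Finset V, S.card = m ∧ ∀ v : V, d < ((S.filter (G.Adj v)).card : ℝ) := by
  subst hcard hδ
  have hm1 : (1 : ℝ) ≤ m := by exact_mod_cast hm
  have hd0 : 0 < d := by linarith
  obtain ⟨v₀⟩ : Nonempty V := Fintype.card_pos_iff.mp (hm.trans_le hmm)
  have hδV : (G.minDegree : ℝ) + 1 ≤ Fintype.card V := by
    exact_mod_cast (G.minDegree_le_degree v₀).trans_lt (G.degree_lt_card_verts v₀)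
  set μ : ℝ := m * G.minDegree / Fintype.card V with hμdef
  have hμ : (Fintype.card V : ℝ) * μ = m * G.minDegree := mul_div_cancel₀ _ (by linarith)
  have hrμ : r = μ / d := by rw [hr, hμdef, div_div]
  have hdμ : d ≤ μ := (one_le_div hd0).mp (hrμ ▸ hr1)
  have hmV : (m : ℝ) ≤ Fintype.card V := by exact_mod_cast hmm
  rw [hrμ, show (μ / d - 1) * d = μ - d by field_simp] at hmain
  exact G.exists_card_eq_forall_lt_card_filter_adj hmm G.minDegree_le_degree hμ (by nlinarith)
    (by nlinarith) hd hdμ hmain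
end

section
/- Let G be a graph with at least one edge and let H be a connected graph. Then for every positive integer n, the asymmetric Ramsey number satisfies r(G, nH) ≥ n·|H| + r(𝒟(G), H) − 1. In particular, there is a 2-colouring of the edges of the complete graph on n·|H| + r(𝒟(G), H) − 2 vertices with no red copy of G and no blue copy of nH. -/
open Finset

/-!
Let `s = r(𝒟(G), H) - 1` and take a colouring `R₀` of `K_s` with no red member of `𝒟(G)` and no
blue `H`. Add a blue clique on `n|H| - 1` further vertices, joined to `K_s` entirely in red.
A red `G` meets the blue clique in an independent set, so after extending that set to a maximal
independent set `I`, the rest `G - I ∈ 𝒟(G)` would be red in `R₀`. Since all edges between the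
two parts are red, every blue copy of the connected graph `H` lies within one part; not in `R₀`,
so all `n` copies of `H` lie in the clique, which is too small. Finiteness of `r(G, nH)`,
needed to turn the colouring into a lower bound, comes from the Erdős–Szekeres bound
`r(K_s, K_t) ≤ (s + t choose s)`.
-/

namespace SimpleGraph

variable {V W U X : Type*}

theorem containsCopy_iff_isContained {H : SimpleGraph W} {G : SimpleGraph V} :
    H.ContainsCopy G ↔ H ⊑ G :=
  ⟨fun ⟨f, hf, _, hadj⟩ => ⟨⟨⟨f, fun h => hadj h⟩, hf⟩⟩,
    fun ⟨f⟩ => ⟨f, f.injective, fun _ => trivial, fun _ _ h => f.toHom.map_adj h⟩⟩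

theorem comap_compl {f : V → U} (hf : Function.Injective f) (R : SimpleGraph U) :
    (R.comap f)ᶜ = Rᶜ.comap f := by
  ext x y
  simp [hf.ne_iff]

@[simp]
theorem sum_comap_inl (G₁ : SimpleGraph X) (G₂ : SimpleGraph U) :
    (G₁ ⊕g G₂).comap Sum.inl = G₁ := by
  ext x y
  simp

@[simp]
theorem sum_comap_inr (G₁ : SimpleGraph X) (G₂ : SimpleGraph U) :
    (G₁ ⊕g G₂).comap Sum.inr = G₂ := by
  ext x y
  simp

theorem Copy.isContained_comap {A : SimpleGraph V} {B : SimpleGraph U} (f : Copy A B)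
    {g : X → U} (hf : ∀ v, f v ∈ Set.range g) :
    A ⊑ B.comap g := by
  choose φ hφ using hf
  refine ⟨⟨⟨φ, fun {a b} hab => ?_⟩, fun a b hab => f.injective ?_⟩⟩
  · simpa [hφ] using f.toHom.map_adj hab
  · change φ a = φ b at hab
    change f a = f b
    rw [← hφ a, ← hφ b, hab]

theorem not_isContained_comap {G : SimpleGraph V} {K : SimpleGraph W} {R : SimpleGraph U}
    (e : X ↪ U) (hR : ¬G ⊑ R) (hRc : ¬K ⊑ Rᶜ) : ¬G ⊑ R.comap e ∧ ¬K ⊑ (R.comap e)ᶜ := by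
  refine ⟨fun h => hR (h.trans (Embedding.comap e R).isContained), fun h => hRc ?_⟩
  rw [comap_compl e.injective] at h
  exact h.trans (Embedding.comap e Rᶜ).isContained

theorem Preconnected.forall_mem_range_inl_or_inr {H : SimpleGraph V} (hH : H.Preconnected)
    {G₁ : SimpleGraph X} {G₂ : SimpleGraph U} (f : H →g G₁ ⊕g G₂) :
    (∀ v, f v ∈ Set.range Sum.inl) ∨ ∀ v, f v ∈ Set.range Sum.inr := by
  by_contra! ⟨⟨u, hu⟩, ⟨v, hv⟩⟩
  obtain ⟨y, hy⟩ : ∃ y, f u = .inr y := by cases h : f u <;> simp_all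
  obtain ⟨x, hx⟩ : ∃ x, f v = .inl x := by cases h : f v <;> simp_all
  exact not_reachable_sum_inl_inr x y (hx ▸ hy ▸ (hH v u).map f)

theorem IsIndep.exists_isMaximalIndep_superset [Finite V] {G : SimpleGraph V} {I₀ : Set V}
    (h : G.IsIndep I₀) : ∃ I, I₀ ⊆ I ∧ G.IsMaximalIndep I := by
  obtain ⟨I, hI₀, hmax⟩ := Finite.exists_le_maximal (p := G.IsIndep) h
  exact ⟨I, hI₀, hmax.1, fun J hJ hIJ => (hmax.2 hJ hIJ).antisymm hIJ⟩

section Ramsey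

variable [DecidableEq V]

theorem card_le_card_filter_adj_add_card_filter_compl_adj (R : SimpleGraph V)
    [DecidableRel R.Adj] (v : V) (A : Finset V) :
    #A ≤ #(A.filter (R.Adj v)) + #(A.filter (Rᶜ.Adj v)) + 1 :=
  calc #A ≤ #(insert v (A.filter (R.Adj v) ∪ A.filter (Rᶜ.Adj v))) := by
        refine card_le_card fun x hx => ?_
        by_cases hxv : v = x
        · simp [hxv]
        · by_cases hR : R.Adj v x <;> simp [hx, hR, hxv]
    _ ≤ _ := (card_insert_le _ _).trans (by gcongr; exact card_union_le _ _)

theorem exists_isNClique_or_isNClique_compl (R : SimpleGraph V) (s t : ℕ) (A : Finset V)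
    (hA : (s + t).choose s ≤ #A) :
    (∃ S ⊆ A, R.IsNClique s S) ∨ ∃ S ⊆ A, Rᶜ.IsNClique t S := by
  classical
  induction s generalizing t A with
  | zero => exact .inl ⟨∅, empty_subset _, isNClique_zero.2 rfl⟩
  | succ s ihs =>
    induction t generalizing A with
    | zero => exact .inr ⟨∅, empty_subset _, isNClique_zero.2 rfl⟩
    | succ t iht =>
      have hpascal : (s + 1 + (t + 1)).choose (s + 1) =
          (s + (t + 1)).choose s + (s + 1 + t).choose (s + 1) := by
        rw [show s + 1 + (t + 1) = s + 1 + t + 1 by omega, Nat.choose_succ_succ',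
          show s + 1 + t = s + (t + 1) by omega]
      have hpos₁ := Nat.choose_pos (show s ≤ s + (t + 1) by omega)
      have hpos₂ := Nat.choose_pos (show s + 1 ≤ s + 1 + t by omega)
      obtain ⟨v, hv⟩ := card_pos.1 (show 0 < #A by omega)
      have extend : ∀ (K : SimpleGraph V) [DecidableRel K.Adj] (k : ℕ) (S : Finset V),
          S ⊆ A.filter (K.Adj v) → K.IsNClique k S → ∃ S' ⊆ A, K.IsNClique (k + 1) S' :=
        fun K _ k S hSA hS => ⟨insert v S, insert_subset hv (hSA.trans (filter_subset _ _)),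
          hS.insert fun b hb => (mem_filter.1 (hSA hb)).2⟩
      have hsplit := card_le_card_filter_adj_add_card_filter_compl_adj R v A
      rcases le_or_gt ((s + (t + 1)).choose s) #(A.filter (R.Adj v)) with hred | hblue
      · rcases ihs (t + 1) _ hred with ⟨S, hSA, hS⟩ | ⟨S, hSA, hS⟩
        · exact .inl (extend R s S hSA hS)
        · exact .inr ⟨S, hSA.trans (filter_subset _ _), hS⟩
      · rcases iht (A.filter (Rᶜ.Adj v)) (by omega) with ⟨S, hSA, hS⟩ | ⟨S, hSA, hS⟩
        · exact .inl ⟨S, hSA.trans (filter_subset _ _), hS⟩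
        · exact .inr (extend Rᶜ t S hSA hS)

end Ramsey

theorem IsNClique.isContained [Fintype W] {R : SimpleGraph V} {S : Finset V}
    (h : R.IsNClique (Fintype.card W) S) (K : SimpleGraph W) : K ⊑ R := by
  have e : W ≃ S := Fintype.equivOfCardEq (by simp [h.card_eq])
  have hK : K ⊑ R.induce (S : Set V) := by
    rw [induce_eq_top.2 h.isClique]
    exact isContained_top_iff.2 ⟨e.toEmbedding⟩
  exact hK.trans ⟨Copy.induce R _⟩

theorem isContained_or_isContained_compl [Fintype V] [Fintype W] [Fintype U]
    (G : SimpleGraph V) (K : SimpleGraph W) (R : SimpleGraph U)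
    (hU : (Fintype.card V + Fintype.card W).choose (Fintype.card V) ≤ Fintype.card U) :
    G ⊑ R ∨ K ⊑ Rᶜ := by
  classical
  exact (exists_isNClique_or_isNClique_compl R _ _ univ (by simpa using hU)).imp
    (fun ⟨_, _, h⟩ => h.isContained G) (fun ⟨_, _, h⟩ => h.isContained K)

theorem lt_ramsey2 [Fintype V] [Fintype W] {N : ℕ} {G : SimpleGraph V} {K : SimpleGraph W}
    (R : SimpleGraph (Fin N)) (hR : ¬G ⊑ R) (hRc : ¬K ⊑ Rᶜ) : N < G.ramsey2 K := by
  unfold ramsey2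
  refine Nat.lt_of_succ_le
    (le_csInf ⟨(Fintype.card V + Fintype.card W).choose (Fintype.card V), ?_⟩ fun M hM => ?_)
  · intro R'
    simp only [containsCopy_iff_isContained]
    exact isContained_or_isContained_compl G K R' (by simp)
  · by_contra! hMN
    obtain ⟨hR', hRc'⟩ := not_isContained_comap (Fin.castLEEmb (Nat.le_of_lt_succ hMN)) hR hRc
    simp only [Set.mem_ofPred_eq, containsCopy_iff_isContained] at hM
    exact (hM _).elim hR' hRc'

theorem exists_not_containsCopyOfD_not_isContained_compl [Nonempty W] {G : SimpleGraph V}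
    (hG : ∃ x y, G.Adj x y) (H : SimpleGraph W) :
    ∃ R : SimpleGraph (Fin (G.ramseyDFam H - 1)), ¬G.ContainsCopyOfD R ∧ ¬H ⊑ Rᶜ := by
  -- No finiteness of `r(𝒟(G), H)` is needed: `sInf ∅ = 0`, and then `0 - 1 = 0`.
  have h0 : ¬∀ R : SimpleGraph (Fin 0), G.ContainsCopyOfD R ∨ H.ContainsCopy Rᶜ := fun h => by
    rcases h ⊥ with ⟨I, hI, f, -⟩ | ⟨f, -⟩
    · obtain ⟨x, y, hxy⟩ := hG
      have hmem : ∀ z, z ∈ I := fun z => by_contra fun hz => (f ⟨z, hz⟩).elim0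
      exact hI.1 (hmem x) (hmem y) hxy.ne hxy
    · exact (f (Classical.arbitrary W)).elim0
  have hpred : ¬∀ R : SimpleGraph (Fin (G.ramseyDFam H - 1)),
      G.ContainsCopyOfD R ∨ H.ContainsCopy Rᶜ := fun h => by
    have hzero : G.ramseyDFam H = 0 := by
      have : G.ramseyDFam H ≤ G.ramseyDFam H - 1 := Nat.sInf_le h
      omega
    rw [hzero] at h
    exact h0 h
  push Not at hpred
  simpa only [containsCopy_iff_isContained] using hpred

theorem containsCopyOfD_of_isContained_compl_sum [Finite V] {G : SimpleGraph V}
    {R : SimpleGraph U} (h : G ⊑ (⊤ ⊕g Rᶜ : SimpleGraph (X ⊕ U))ᶜ) : G.ContainsCopyOfD R := by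
  obtain ⟨f⟩ := h
  have hindep : G.IsIndep {v | (f v).isLeft} := by
    intro u hu v hv _ huv
    obtain ⟨x, hx⟩ := Sum.isLeft_iff.1 hu
    obtain ⟨y, hy⟩ := Sum.isLeft_iff.1 hv
    simpa [hx, hy] using f.toHom.map_adj huv
  obtain ⟨I, hsub, hI⟩ := hindep.exists_isMaximalIndep_superset
  refine ⟨I, hI, containsCopy_iff_isContained.2 ?_⟩
  have hright : ∀ v : ↥Iᶜ, f v ∈ Set.range Sum.inr := fun v => by
    cases h : f v with
    | inl x => exact absurd (hsub (by simp [h])) v.2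
    | inr y => exact ⟨y, rfl⟩
  have := (f.comp (Copy.induce G Iᶜ)).isContained_comap hright
  rwa [← comap_compl Sum.inr_injective, sum_comap_inr, compl_compl] at this

theorem nCopies_isContained_left_of_isContained_sum {H : SimpleGraph V} (hH : H.Preconnected)
    {n : ℕ} {G₁ : SimpleGraph X} {G₂ : SimpleGraph U} (h : H.nCopies n ⊑ G₁ ⊕g G₂)
    (hG₂ : ¬H ⊑ G₂) : H.nCopies n ⊑ G₁ := by
  obtain ⟨f⟩ := h
  let slice (i : Fin n) : Copy H (H.nCopies n) :=
    ⟨⟨fun w => (i, w), fun h => ⟨rfl, h⟩⟩, fun _ _ h => (Prod.ext_iff.1 h).2⟩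
  have hleft (i : Fin n) (v : V) : f (i, v) ∈ Set.range Sum.inl := by
    rcases hH.forall_mem_range_inl_or_inr (f.comp (slice i)).toHom with hl | hr
    · exact hl v
    · simpa using hG₂ ((f.comp (slice i)).isContained_comap hr)
  simpa using f.isContained_comap fun p => hleft p.1 p.2

end SimpleGraph

open SimpleGraph

/-- For `G` with at least one edge and connected `H`, for every `n ≥ 1` we
have `r(G, nH) ≥ n·|H| + r(𝒟(G), H) - 1`; in particular there is a colouring of
`K_{n·|H| + r(𝒟(G),H) - 2}` with no red `G` and no blue `nH`. -/
theorem ramsey_asym_nCopies_lower (a b : ℕ) (G : SimpleGraph (Fin a))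
    (H : SimpleGraph (Fin b)) (hG : ∃ x y, G.Adj x y) (hH : H.Connected)
    (n : ℕ) (hn : 0 < n) :
    ((n : ℤ) * b + (G.ramseyDFam H : ℤ) - 1 ≤ (G.ramsey2 (SimpleGraph.nCopies n H) : ℤ)) ∧
    ∃ Red : SimpleGraph (Fin (n * b + G.ramseyDFam H - 2)),
      ¬ G.ContainsCopy Red ∧ ¬ (SimpleGraph.nCopies n H).ContainsCopy Redᶜ := by
  have : Nonempty (Fin b) := hH.nonempty
  have hnb : 0 < n * b := Nat.mul_pos hn Fin.pos'
  obtain ⟨R₀, hD, hB⟩ := exists_not_containsCopyOfD_not_isContained_compl hG H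
  -- The blue graph `Redᶜ` is a clique on `n * b - 1` vertices next to the blue graph of `R₀`.
  let Red : SimpleGraph (Fin (n * b - 1) ⊕ Fin (G.ramseyDFam H - 1)) := (⊤ ⊕g R₀ᶜ)ᶜ
  have hRed : ¬G ⊑ Red := fun h => hD (containsCopyOfD_of_isContained_compl_sum h)
  have hBlue : ¬H.nCopies n ⊑ Redᶜ := fun h => by
    obtain ⟨f⟩ := nCopies_isContained_left_of_isContained_sum hH.preconnected
      (compl_compl (⊤ ⊕g R₀ᶜ) ▸ h) hB
    have := Fintype.card_le_of_injective f f.injective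
    simp only [Fintype.card_prod, Fintype.card_fin] at this
    omega
  let e : Fin (n * b + G.ramseyDFam H - 2) ↪ Fin (n * b - 1) ⊕ Fin (G.ramseyDFam H - 1) :=
    (Fin.castLEEmb (by omega)).trans finSumFinEquiv.symm.toEmbedding
  obtain ⟨hRed', hBlue'⟩ := not_isContained_comap e hRed hBlue
  have hlt := lt_ramsey2 _ hRed' hBlue'
  refine ⟨by omega, Red.comap e, ?_⟩
  simpa only [containsCopy_iff_isContained] using And.intro hRed' hBlue'
end
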